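/- arXiv:1205.1372 — 2 statements merged into one kernel-verified Lean document; each statement's English description precedes it below -/
import Mathlib

section
/- Let U: G → U(H) satisfy U(g')U(g) = e^{iMξ(g',g)}U(g'g) with M > 0 real, where for elements f = (translation by c) and g = (boost by v) of the Galilei group one has f⁻¹g⁻¹fg = e but U(f)⁻¹U(g)⁻¹U(f)U(g) = e^{−2iM c·v}·I. Then there is no assignment of phases ρ_g ∈ U(1) such that the operators V(g) = ρ_g U(g) satisfy V(g')V(g) = V(g'g) for all g, g' ∈ G. -/
open Matrix

/-- Bargmann's no-go (1): if `U(g')U(g) = e^{iMξ(g',g)} U(g'g)` with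
`M > 0`, and there are elements `f` (translation by `c`) and `g` (boost by `v`) with
`f⁻¹g⁻¹fg = e` but `U(f)⁻¹U(g)⁻¹U(f)U(g) = e^{−2iM c·v}·I` with `e^{−2iM c·v} ≠ 1`,
then no phases `ρ_g ∈ U(1)` make `V(g) = ρ_g U(g)` a true representation. -/
theorem stmt5 {G : Type*} [Group G]
    {H : Type*} [NormedAddCommGroup H] [InnerProductSpace ℂ H] [CompleteSpace H]
    [Nontrivial H]
    (M : ℝ) (hM : 0 < M)
    (U : G → (H →L[ℂ] H)ˣ)
    (hUuni : ∀ g (x : H), ‖(U g : H →L[ℂ] H) x‖ = ‖x‖)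
    (ξ : G → G → ℝ)
    (hUrep : ∀ g' g : G,
      ((U g' : H →L[ℂ] H) * (U g : H →L[ℂ] H))
        = Complex.exp (Complex.I * M * ξ g' g) • (U (g' * g) : H →L[ℂ] H))
    (f g : G) (c v : Fin 3 → ℝ)
    (hcomm : f⁻¹ * g⁻¹ * f * g = 1)
    (hUcomm : (((U f)⁻¹ : (H →L[ℂ] H)ˣ) : H →L[ℂ] H)
        * (((U g)⁻¹ : (H →L[ℂ] H)ˣ) : H →L[ℂ] H)
        * (U f : H →L[ℂ] H) * (U g : H →L[ℂ] H)
        = Complex.exp (-(2 * Complex.I * M * (c ⬝ᵥ v))) • (1 : H →L[ℂ] H))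
    (hphase : Complex.exp (-(2 * Complex.I * M * (c ⬝ᵥ v))) ≠ 1) :
    ¬ ∃ ρ : G → ℂ, (∀ g, ‖ρ g‖ = 1) ∧
      ∀ g' g : G,
        (ρ g' • (U g' : H →L[ℂ] H)) * (ρ g • (U g : H →L[ℂ] H))
          = ρ (g' * g) • (U (g' * g) : H →L[ℂ] H) := by
  rintro ⟨ρ, hρ, hrep⟩
  set lam : ℂ := Complex.exp (-(2 * Complex.I * M * (c ⬝ᵥ v))) with hlam
  -- commutativity in the group
  have hfg : f * g = g * f := by
    have h := congrArg (fun x => g * f * x) hcomm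
    simpa [mul_assoc] using h
  -- U f * U g = lam • (U g * U f)
  have hU : (U f : H →L[ℂ] H) * (U g : H →L[ℂ] H)
      = lam • ((U g : H →L[ℂ] H) * (U f : H →L[ℂ] H)) := by
    have h := congrArg (fun x => (U g : H →L[ℂ] H) * (U f : H →L[ℂ] H) * x) hUcomm
    simp only [mul_assoc, Units.mul_inv_cancel_left] at h
    rw [h]
    simp [mul_smul_comm, mul_one]
  -- from the representation property
  have h1 := hrep f g
  have h2 := hrep g f
  rw [hfg] at h1
  have hkey : (ρ f * ρ g) • ((U f : H →L[ℂ] H) * (U g : H →L[ℂ] H))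
      = (ρ f * ρ g) • ((U g : H →L[ℂ] H) * (U f : H →L[ℂ] H)) := by
    have : (ρ f • (U f : H →L[ℂ] H)) * (ρ g • (U g : H →L[ℂ] H))
        = (ρ g • (U g : H →L[ℂ] H)) * (ρ f • (U f : H →L[ℂ] H)) := h1.trans h2.symm
    calc (ρ f * ρ g) • ((U f : H →L[ℂ] H) * (U g : H →L[ℂ] H))
        = (ρ f • (U f : H →L[ℂ] H)) * (ρ g • (U g : H →L[ℂ] H)) := by
          rw [smul_mul_assoc, mul_smul_comm, smul_smul]
      _ = (ρ g • (U g : H →L[ℂ] H)) * (ρ f • (U f : H →L[ℂ] H)) := this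
      _ = (ρ f * ρ g) • ((U g : H →L[ℂ] H) * (U f : H →L[ℂ] H)) := by
          rw [smul_mul_assoc, mul_smul_comm, smul_smul, mul_comm (ρ g)]
  have hρfg : ρ f * ρ g ≠ 0 := by
    have h1 : ρ f ≠ 0 := fun h => by simpa [h] using hρ f
    have h2 : ρ g ≠ 0 := fun h => by simpa [h] using hρ g
    exact mul_ne_zero h1 h2
  rw [hU] at hkey
  have hA : ((U g : H →L[ℂ] H) * (U f : H →L[ℂ] H)) ≠ 0 := by
    intro h
    obtain ⟨x, hx⟩ := exists_ne (0 : H)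
    have : ‖(U g : H →L[ℂ] H) ((U f : H →L[ℂ] H) x)‖ = ‖x‖ := by
      rw [hUuni g, hUuni f]
    rw [show (U g : H →L[ℂ] H) ((U f : H →L[ℂ] H) x)
        = ((U g : H →L[ℂ] H) * (U f : H →L[ℂ] H)) x from rfl, h] at this
    simp only [ContinuousLinearMap.zero_apply, norm_zero] at this
    exact hx (norm_eq_zero.mp this.symm)
  have := smul_right_injective ((H →L[ℂ] H)) hρfg hkey
  have hl1 : (lam - 1) • ((U g : H →L[ℂ] H) * (U f : H →L[ℂ] H)) = 0 := by
    rw [sub_smul, this, one_smul, sub_self]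
  rcases smul_eq_zero.mp hl1 with h | h
  · exact hphase (by rwa [sub_eq_zero] at h)
  · exact hA h
end

section
/- Let H = ⨁_M H_M with projections P_M, and let A, A' ∈ B(H). Then A_B = A'_B if and only if tr(ρA) = tr(ρA') for every positive trace-class operator ρ of unit trace commuting with all P_M. -/
/-!
Put `T = A - A'`. Since the `P i` are mutually orthogonal projections summing to the identity,
`A_B = A'_B` holds exactly when every diagonal block `P i T P i` vanishes.

If it does and `ρ` is a density operator commuting with the `P i`, then `s = √ρ` is
Hilbert–Schmidt, and cyclicity of the trace for products of Hilbert–Schmidt operators gives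
`tr(ρT) = tr(sTs) = ∑ᵢ tr(sTPᵢ · Pᵢs) = ∑ᵢ tr(Pᵢ ρ T Pᵢ) = ∑ᵢ tr(ρ · PᵢTPᵢ) = 0`.

Conversely, testing against the rank-one projection onto a unit vector `z` in the range of `P i`
gives `⟪z, T z⟫ = 0`, and complex polarization upgrades this to `P i T P i = 0`.
-/

open scoped InnerProductSpace
open ContinuousLinearMap InnerProductSpace

theorem summable_mul_of_summable_sq {α : Type*} {f g : α → ℝ}
    (hf : Summable fun a => f a ^ 2) (hg : Summable fun a => g a ^ 2) :
    Summable fun a => f a * g a :=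
  .of_norm_bounded ((hf.add hg).mul_left (1 / 2)) fun a => by
    rw [Real.norm_eq_abs, abs_mul]
    nlinarith [two_mul_le_add_sq |f a| |g a|, sq_abs (f a), sq_abs (g a)]

section RCLike

variable {𝕜 E : Type*} [RCLike 𝕜] [NormedAddCommGroup E] [InnerProductSpace 𝕜 E]

theorem summable_inner_of_summable_norm_sq {α : Type*} {f g : α → E}
    (hf : Summable fun a => ‖f a‖ ^ 2) (hg : Summable fun a => ‖g a‖ ^ 2) :
    Summable fun a => ⟪f a, g a⟫_𝕜 :=
  .of_norm_bounded (summable_mul_of_summable_sq hf hg) fun _ => norm_inner_le_norm _ _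

section Pinching

variable {ι : Type*} {P : ι → E →L[𝕜] E}

theorem proj_apply_eq_of_hasSum_pinching (hproj : ∀ i, IsIdempotentElem (P i))
    (horth : ∀ i j, i ≠ j → P i * P j = 0) {A AB : E →L[𝕜] E}
    (hAB : ∀ x, HasSum (fun i => P i (A (P i x))) (AB x)) (j : ι) (x : E) :
    P j (AB x) = P j (A (P j x)) := by
  have hoff (i : ι) (hi : i ≠ j) : P j (P i (A (P i x))) = 0 := by
    rw [← mul_apply_eq_comp, horth j i (Ne.symm hi), zero_apply]
  rw [((P j).hasSum (hAB x)).unique (hasSum_single j hoff), ← mul_apply_eq_comp, (hproj j).eq]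

theorem pinching_eq_iff (hproj : ∀ i, IsIdempotentElem (P i))
    (horth : ∀ i j, i ≠ j → P i * P j = 0) {A A' AB AB' : E →L[𝕜] E}
    (hAB : ∀ x, HasSum (fun i => P i (A (P i x))) (AB x))
    (hAB' : ∀ x, HasSum (fun i => P i (A' (P i x))) (AB' x)) :
    AB = AB' ↔ ∀ i, P i ∘L A ∘L P i = P i ∘L A' ∘L P i := by
  constructor
  · rintro rfl i
    ext x
    simp only [comp_apply, ← proj_apply_eq_of_hasSum_pinching hproj horth hAB,
      ← proj_apply_eq_of_hasSum_pinching hproj horth hAB']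
  · intro h
    ext x
    refine (hAB x).unique ?_
    convert hAB' x using 2 with i
    exact congr($(h i) x)

end Pinching

namespace HilbertBasis

variable {κ : Type*} (b : HilbertBasis κ 𝕜 E)

theorem hasSum_norm_inner_sq (x : E) : HasSum (fun k => ‖⟪b k, x⟫_𝕜‖ ^ 2) (‖x‖ ^ 2) := by
  simpa [b.repr_apply_apply] using lp.hasSum_norm (p := 2) (by norm_num) (b.repr x)

def IsHilbertSchmidt (T : E →L[𝕜] E) : Prop :=
  Summable fun k => ‖T (b k)‖ ^ 2

variable {b}

theorem IsHilbertSchmidt.summable_norm_inner_sq {T : E →L[𝕜] E} (hT : b.IsHilbertSchmidt T) :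
    Summable fun p : κ × κ => ‖⟪b p.1, T (b p.2)⟫_𝕜‖ ^ 2 := by
  have hcolumns : Summable fun q : κ × κ => ‖⟪b q.2, T (b q.1)⟫_𝕜‖ ^ 2 :=
    (summable_prod_of_nonneg fun _ => sq_nonneg _).2
      ⟨fun j => (b.hasSum_norm_inner_sq (T (b j))).summable,
        hT.congr fun j => (b.hasSum_norm_inner_sq _).tsum_eq.symm⟩
  exact hcolumns.prod_symm

theorem IsHilbertSchmidt.clm_comp {T : E →L[𝕜] E} (hT : b.IsHilbertSchmidt T) (C : E →L[𝕜] E) :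
    b.IsHilbertSchmidt (C ∘L T) :=
  .of_nonneg_of_le (fun _ => by positivity)
    (fun k => by rw [comp_apply, ← mul_pow]; gcongr; exact C.le_opNorm _)
    (hT.mul_left (‖C‖ ^ 2))

variable [CompleteSpace E]

theorem IsHilbertSchmidt.adjoint {T : E →L[𝕜] E} (hT : b.IsHilbertSchmidt T) :
    b.IsHilbertSchmidt (ContinuousLinearMap.adjoint T) := by
  refine ((summable_prod_of_nonneg fun _ => sq_nonneg _).1 hT.summable_norm_inner_sq).2.congr
    fun k => ?_
  rw [← (b.hasSum_norm_inner_sq _).tsum_eq]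
  simp only [adjoint_inner_right, norm_inner_symm]

theorem IsHilbertSchmidt.comp_clm {T : E →L[𝕜] E} (hT : b.IsHilbertSchmidt T) (C : E →L[𝕜] E) :
    b.IsHilbertSchmidt (T ∘L C) := by
  simpa only [adjoint_comp, adjoint_adjoint] using
    (hT.adjoint.clm_comp (ContinuousLinearMap.adjoint C)).adjoint

theorem summable_inner_apply_apply {U V : E →L[𝕜] E} (hU : b.IsHilbertSchmidt U)
    (hV : b.IsHilbertSchmidt V) : Summable fun k => ⟪b k, U (V (b k))⟫_𝕜 := by
  simpa only [adjoint_inner_left] using summable_inner_of_summable_norm_sq (𝕜 := 𝕜) hU.adjoint hV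

theorem tsum_inner_apply_apply_comm {U V : E →L[𝕜] E} (hU : b.IsHilbertSchmidt U)
    (hV : b.IsHilbertSchmidt V) :
    ∑' k, ⟪b k, U (V (b k))⟫_𝕜 = ∑' k, ⟪b k, V (U (b k))⟫_𝕜 := by
  set F : κ → κ → 𝕜 := fun k j => ⟪b k, U (b j)⟫_𝕜 * ⟪b j, V (b k)⟫_𝕜
  have hF : Summable (Function.uncurry F) :=
    .of_norm_bounded (summable_mul_of_summable_sq hU.summable_norm_inner_sq
      hV.summable_norm_inner_sq.prod_symm) fun _ => (norm_mul _ _).le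
  have hrow (k : κ) : HasSum (F k) ⟪b k, U (V (b k))⟫_𝕜 := by
    simpa only [adjoint_inner_left] using b.hasSum_inner_mul_inner (adjoint U (b k)) (V (b k))
  have hcolumn (j : κ) : HasSum (fun k => F k j) ⟪b j, V (U (b j))⟫_𝕜 := by
    simpa only [F, adjoint_inner_left, mul_comm] using
      b.hasSum_inner_mul_inner (adjoint V (b j)) (U (b j))
  calc ∑' k, ⟪b k, U (V (b k))⟫_𝕜 = ∑' k, ∑' j, F k j :=
        tsum_congr fun k => (hrow k).tsum_eq.symm
    _ = ∑' j, ∑' k, F k j := hF.tsum_comm.symm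
    _ = ∑' j, ⟪b j, V (U (b j))⟫_𝕜 := tsum_congr fun j => (hcolumn j).tsum_eq

variable (b)

theorem hasSum_inner_rankOne_self_apply (z : E) (C : E →L[𝕜] E) :
    HasSum (fun k => ⟪b k, rankOne 𝕜 z z (C (b k))⟫_𝕜) ⟪z, C z⟫_𝕜 := by
  simpa only [inner_right_rankOne_apply, adjoint_inner_left, mul_comm] using
    b.hasSum_inner_mul_inner (adjoint C z) z

theorem hasSum_re_inner_rankOne_self {z : E} (hz : ‖z‖ = 1) :
    HasSum (fun k => RCLike.re ⟪b k, rankOne 𝕜 z z (b k)⟫_𝕜) 1 := by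
  simpa [inner_self_eq_norm_sq_to_K, hz] using
    RCLike.hasSum_re _ (b.hasSum_inner_rankOne_self_apply z (.id 𝕜 E))

end HilbertBasis

variable [CompleteSpace E]

theorem IsStarProjection.inner_apply_apply {p : E →L[𝕜] E} (hp : IsStarProjection p) (x y : E) :
    ⟪p x, p y⟫_𝕜 = ⟪x, p y⟫_𝕜 := by
  rw [← adjoint_inner_right, isSelfAdjoint_iff'.mp hp.isSelfAdjoint, ← mul_apply_eq_comp,
    hp.isIdempotentElem.eq]

theorem commute_rankOne_self {p : E →L[𝕜] E} (hp : IsSelfAdjoint p) {z : E} {t : ℝ}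
    (hz : p z = (t : 𝕜) • z) : Commute p (rankOne 𝕜 z z) := by
  rw [commute_iff_eq, mul_def, mul_def, comp_rankOne, rankOne_comp,
    isSelfAdjoint_iff'.mp hp, hz]
  simp

variable {ι : Type*} {P : ι → E →L[𝕜] E}

theorem commute_proj_rankOne_self (hsa : ∀ i, IsSelfAdjoint (P i))
    (horth : ∀ i j, i ≠ j → P i * P j = 0) {i : ι} {z : E} (hz : P i z = z) (j : ι) :
    Commute (P j) (rankOne 𝕜 z z) := by
  by_cases hji : j = i
  · subst hji
    exact commute_rankOne_self (hsa j) (t := 1) (by simp [hz])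
  · refine commute_rankOne_self (hsa j) (t := 0) ?_
    rw [← hz, ← mul_apply_eq_comp, horth j i hji]
    simp

theorem hasSum_norm_sq_of_hasSum_apply (hP : ∀ i, IsStarProjection (P i)) {x : E}
    (hx : HasSum (fun i => P i x) x) : HasSum (fun i => ‖P i x‖ ^ 2) (‖x‖ ^ 2) := by
  have hterm (i : ι) : ⟪x, P i x⟫_𝕜 = ((‖P i x‖ ^ 2 : ℝ) : 𝕜) := by
    rw [← (hP i).inner_apply_apply, inner_self_eq_norm_sq_to_K]
    norm_cast
  have h := (innerSL 𝕜 x).hasSum hx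
  simp only [innerSL_apply_apply, hterm, inner_self_eq_norm_sq_to_K] at h
  exact_mod_cast h

namespace HilbertBasis

variable {κ : Type*} {b : HilbertBasis κ 𝕜 E}

theorem IsHilbertSchmidt.summable_norm_proj_apply_sq
    (hP : ∀ i, IsStarProjection (P i)) (hcompl : ∀ x, HasSum (fun i => P i x) x)
    {T : E →L[𝕜] E} (hT : b.IsHilbertSchmidt T) :
    Summable fun p : κ × ι => ‖P p.2 (T (b p.1))‖ ^ 2 :=
  (summable_prod_of_nonneg fun _ => sq_nonneg _).2
    ⟨fun k => (hasSum_norm_sq_of_hasSum_apply hP (hcompl (T (b k)))).summable,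
      hT.congr fun _ => (hasSum_norm_sq_of_hasSum_apply hP (hcompl _)).tsum_eq.symm⟩

theorem tsum_inner_apply_apply_eq_tsum_tsum
    (hP : ∀ i, IsStarProjection (P i)) (hcompl : ∀ x, HasSum (fun i => P i x) x)
    {U V : E →L[𝕜] E} (hU : b.IsHilbertSchmidt U) (hV : b.IsHilbertSchmidt V) :
    ∑' k, ⟪b k, U (V (b k))⟫_𝕜 = ∑' i, ∑' k, ⟪b k, U (P i (V (b k)))⟫_𝕜 := by
  set F : κ → ι → 𝕜 := fun k i => ⟪b k, U (P i (V (b k)))⟫_𝕜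
  have hF : Summable (Function.uncurry F) := by
    refine (summable_inner_of_summable_norm_sq (𝕜 := 𝕜)
      (hU.adjoint.summable_norm_proj_apply_sq hP hcompl)
      (hV.summable_norm_proj_apply_sq hP hcompl)).congr fun p => ?_
    simp only [Function.uncurry, F, (hP _).inner_apply_apply, adjoint_inner_left]
  have hrow (k : κ) : HasSum (F k) ⟪b k, U (V (b k))⟫_𝕜 :=
    ((innerSL 𝕜 (b k)).comp U).hasSum (hcompl (V (b k)))
  calc ∑' k, ⟪b k, U (V (b k))⟫_𝕜 = ∑' k, ∑' i, F k i :=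
        tsum_congr fun k => (hrow k).tsum_eq.symm
    _ = ∑' i, ∑' k, F k i := hF.tsum_comm.symm

end HilbertBasis

end RCLike

section Complex

variable {H : Type*} [NormedAddCommGroup H] [InnerProductSpace ℂ H] [CompleteSpace H]
  {κ : Type*} {b : HilbertBasis κ ℂ H} {ρ : H →L[ℂ] H}

theorem ContinuousLinearMap.IsPositive.sqrt_apply_sqrt_apply (hρ : ρ.IsPositive) (x : H) :
    CFC.sqrt ρ (CFC.sqrt ρ x) = ρ x := by
  rw [← mul_apply_eq_comp, CFC.sqrt_mul_sqrt_self ρ ((nonneg_iff_isPositive ρ).2 hρ)]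

namespace HilbertBasis

theorem isHilbertSchmidt_sqrt (hρ : ρ.IsPositive)
    (hρb : Summable fun k => (⟪b k, ρ (b k)⟫_ℂ).re) : b.IsHilbertSchmidt (CFC.sqrt ρ) := by
  refine hρb.congr fun k => ?_
  rw [← hρ.sqrt_apply_sqrt_apply, ← inner_self_eq_norm_sq (𝕜 := ℂ), ← adjoint_inner_right,
    isSelfAdjoint_iff'.mp (.of_nonneg (CFC.sqrt_nonneg ρ))]
  rfl

theorem summable_inner_apply_apply_of_isPositive (hρ : ρ.IsPositive)
    (hρb : Summable fun k => (⟪b k, ρ (b k)⟫_ℂ).re) (C : H →L[ℂ] H) :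
    Summable fun k => ⟪b k, ρ (C (b k))⟫_ℂ := by
  have hs := isHilbertSchmidt_sqrt hρ hρb
  refine (summable_inner_apply_apply hs (hs.comp_clm C)).congr fun k => ?_
  rw [comp_apply, hρ.sqrt_apply_sqrt_apply]

variable {ι : Type*} {P : ι → H →L[ℂ] H}

theorem tsum_inner_apply_apply_eq_zero
    (hP : ∀ i, IsStarProjection (P i)) (hcompl : ∀ x, HasSum (fun i => P i x) x)
    (hρ : ρ.IsPositive) (hρb : Summable fun k => (⟪b k, ρ (b k)⟫_ℂ).re)
    (hcomm : ∀ i, Commute (P i) ρ) {T : H →L[ℂ] H} (hT : ∀ i, P i ∘L T ∘L P i = 0) :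
    ∑' k, ⟪b k, ρ (T (b k))⟫_ℂ = 0 := by
  set s := CFC.sqrt ρ
  have hs : b.IsHilbertSchmidt s := isHilbertSchmidt_sqrt hρ hρb
  have hPP (i : ι) (x : H) : P i (P i x) = P i x := by
    rw [← mul_apply_eq_comp, (hP i).isIdempotentElem.eq]
  have hblock (i : ι) (x : H) : P i (s (s (T (P i x)))) = 0 := by
    rw [hρ.sqrt_apply_sqrt_apply, ← mul_apply_eq_comp, (hcomm i).eq, mul_apply_eq_comp]
    exact congr(ρ ($(hT i) x)).trans (map_zero ρ)
  calc ∑' k, ⟪b k, ρ (T (b k))⟫_ℂ = ∑' k, ⟪b k, s ((s ∘L T) (b k))⟫_ℂ := by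
        simp only [comp_apply, s, hρ.sqrt_apply_sqrt_apply]
    _ = ∑' k, ⟪b k, (s ∘L T) (s (b k))⟫_ℂ := tsum_inner_apply_apply_comm hs (hs.comp_clm T)
    _ = ∑' i, ∑' k, ⟪b k, (s ∘L T) (P i (s (b k)))⟫_ℂ :=
        tsum_inner_apply_apply_eq_tsum_tsum hP hcompl (hs.comp_clm T) hs
    _ = ∑' i, ∑' k, ⟪b k, (s ∘L T ∘L P i) ((P i ∘L s) (b k))⟫_ℂ := by
        simp only [comp_apply, hPP]
    _ = ∑' i, ∑' k, ⟪b k, (P i ∘L s) ((s ∘L T ∘L P i) (b k))⟫_ℂ :=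
        tsum_congr fun i => tsum_inner_apply_apply_comm (hs.comp_clm _) (hs.clm_comp _)
    _ = 0 := by simp only [comp_apply, hblock, inner_zero_right, tsum_zero]

theorem tsum_inner_apply_apply_eq_of_compression_eq
    (hP : ∀ i, IsStarProjection (P i)) (hcompl : ∀ x, HasSum (fun i => P i x) x)
    (hρ : ρ.IsPositive) (hρb : Summable fun k => (⟪b k, ρ (b k)⟫_ℂ).re)
    (hcomm : ∀ i, Commute (P i) ρ) {A A' : H →L[ℂ] H}
    (h : ∀ i, P i ∘L A ∘L P i = P i ∘L A' ∘L P i) :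
    ∑' k, ⟪b k, ρ (A (b k))⟫_ℂ = ∑' k, ⟪b k, ρ (A' (b k))⟫_ℂ := by
  rw [← sub_eq_zero, ← (summable_inner_apply_apply_of_isPositive hρ hρb A).tsum_sub
    (summable_inner_apply_apply_of_isPositive hρ hρb A')]
  simpa only [sub_apply, map_sub, inner_sub_right] using
    tsum_inner_apply_apply_eq_zero hP hcompl hρ hρb hcomm (T := A - A') fun i => by
      rw [sub_comp, comp_sub, h i, sub_self]

end HilbertBasis

theorem compression_eq_of_inner_apply_eq {p A A' : H →L[ℂ] H} (hp : IsStarProjection p)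
    (h : ∀ z, ‖z‖ = 1 → p z = z → ⟪z, A z⟫_ℂ = ⟪z, A' z⟫_ℂ) : p ∘L A ∘L p = p ∘L A' ∘L p := by
  have hrange (w : H) (hw : p w = w) : ⟪w, A w⟫_ℂ = ⟪w, A' w⟫_ℂ := by
    rcases eq_or_ne w 0 with rfl | hw0
    · simp
    have := h ((‖w‖⁻¹ : ℂ) • w) (norm_smul_inv_norm hw0) (by rw [map_smul, hw])
    simpa [inner_smul_left, inner_smul_right, hw0] using this
  refine coe_injective ((ext_inner_map _ _).1 fun x => ?_)
  have hx := hrange (p x) (by rw [← mul_apply_eq_comp, hp.isIdempotentElem.eq])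
  calc ⟪p (A (p x)), x⟫_ℂ = starRingEnd ℂ ⟪p x, A (p x)⟫_ℂ := by
        rw [inner_conj_symm]; exact hp.isSelfAdjoint.isSymmetric _ _
    _ = ⟪p (A' (p x)), x⟫_ℂ := by
        rw [hx, inner_conj_symm]; exact (hp.isSelfAdjoint.isSymmetric _ _).symm

end Complex

theorem stmt13_general {ι : Type*}
    {H : Type*} [NormedAddCommGroup H] [InnerProductSpace ℂ H] [CompleteSpace H]
    {κ : Type*} (b : HilbertBasis κ ℂ H)
    (P : ι → H →L[ℂ] H)
    (hproj : ∀ i, IsIdempotentElem (P i)) (hsa : ∀ i, IsSelfAdjoint (P i))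
    (horth : ∀ i j, i ≠ j → P i * P j = 0)
    (hcompl : ∀ x : H, HasSum (fun i => P i x) x)
    (A A' : H →L[ℂ] H)
    (AB AB' : H →L[ℂ] H)
    (hAB : ∀ x : H, HasSum (fun i => P i (A (P i x))) (AB x))
    (hAB' : ∀ x : H, HasSum (fun i => P i (A' (P i x))) (AB' x)) :
    AB = AB' ↔
      ∀ ρ : H →L[ℂ] H, ρ.IsPositive →
        (Summable fun k => (⟪b k, ρ (b k)⟫_ℂ).re) →
        (∑' k, (⟪b k, ρ (b k)⟫_ℂ).re) = 1 →
        (∀ i, P i * ρ = ρ * P i) →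
        (∑' k, ⟪b k, ρ (A (b k))⟫_ℂ) = ∑' k, ⟪b k, ρ (A' (b k))⟫_ℂ := by
  have hP (i : ι) : IsStarProjection (P i) := ⟨hproj i, hsa i⟩
  rw [pinching_eq_iff hproj horth hAB hAB']
  refine ⟨fun h ρ hρ hρb _ hcomm =>
    b.tsum_inner_apply_apply_eq_of_compression_eq hP hcompl hρ hρb hcomm h, fun h i => ?_⟩
  refine compression_eq_of_inner_apply_eq (hP i) fun z hz hPz => ?_
  have hρb := b.hasSum_re_inner_rankOne_self hz
  simpa only [(b.hasSum_inner_rankOne_self_apply z _).tsum_eq] using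
    h _ (isPositive_rankOne_self z) hρb.summable hρb.tsum_eq
      (commute_proj_rankOne_self hsa horth hPz)

/-- With `H = ⨁_{M∈S} H_M` (projections `P M`) and `A, A' ∈ B(H)`,
one has `A_B = A'_B` if and only if `tr(ρA) = tr(ρA')` for every positive
trace-class `ρ` of unit trace commuting with all `P M`. -/
theorem stmt13 {ι : Type*} [Countable ι]
    {H : Type*} [NormedAddCommGroup H] [InnerProductSpace ℂ H] [CompleteSpace H]
    {κ : Type*} [Countable κ] (b : HilbertBasis κ ℂ H)
    (P : ι → H →L[ℂ] H)
    (hproj : ∀ i, IsIdempotentElem (P i)) (hsa : ∀ i, IsSelfAdjoint (P i))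
    (horth : ∀ i j, i ≠ j → P i * P j = 0)
    (hcompl : ∀ x : H, HasSum (fun i => P i x) x)
    (A A' : H →L[ℂ] H)
    (AB AB' : H →L[ℂ] H)
    (hAB : ∀ x : H, HasSum (fun i => P i (A (P i x))) (AB x))
    (hAB' : ∀ x : H, HasSum (fun i => P i (A' (P i x))) (AB' x)) :
    AB = AB' ↔
      ∀ ρ : H →L[ℂ] H, ρ.IsPositive →
        (Summable fun k => (⟪b k, ρ (b k)⟫_ℂ).re) →
        (∑' k, (⟪b k, ρ (b k)⟫_ℂ).re) = 1 →
        (∀ i, P i * ρ = ρ * P i) →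
        (∑' k, ⟪b k, ρ (A (b k))⟫_ℂ) = ∑' k, ⟪b k, ρ (A' (b k))⟫_ℂ :=
  stmt13_general b P hproj hsa horth hcompl A A' AB AB' hAB hAB'
end
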